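/- Let L be a perfect centerless Lie superalgebra over a field of characteristic ≠ 2, and f : L → L an even linear super-commuting map. Then the super-biderivation δ(x,y) = [x, f(y)] satisfies δ(u, [x,y]) = [u, δ(x,y)] for all u, x, y ∈ L. -/
import Mathlib


/-- The sign `(-1)^(i*j)` for degrees `i j : ZMod 2`, as an element of the field `F`. -/
def ssign (F : Type*) [Field F] (i j : ZMod 2) : F :=
  if i * j = 1 then -1 else 1

/-- A Lie superalgebra structure on an `F`-module `L`: a bilinear bracket together with a
`ZMod 2`-grading by submodules, such that the bracket is graded, super-skewsymmetric and
satisfies the super Jacobi identity on homogeneous elements. -/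
structure LieSuperAlg (F : Type*) [Field F] (L : Type*) [AddCommGroup L] [Module F L] where
  br : L → L → L
  br_add_left : ∀ x y z : L, br (x + y) z = br x z + br y z
  br_smul_left : ∀ (c : F) (x z : L), br (c • x) z = c • br x z
  br_add_right : ∀ x y z : L, br x (y + z) = br x y + br x z
  br_smul_right : ∀ (c : F) (x z : L), br x (c • z) = c • br x z
  G : ZMod 2 → Submodule F L
  isInternal : DirectSum.IsInternal G
  br_deg : ∀ {i j : ZMod 2} {x y : L}, x ∈ G i → y ∈ G j → br x y ∈ G (i + j)
  super_skew : ∀ {i j : ZMod 2} {x y : L}, x ∈ G i → y ∈ G j →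
    br x y = -(ssign F i j • br y x)
  super_jacobi : ∀ {i j k : ZMod 2} {x y z : L}, x ∈ G i → y ∈ G j → z ∈ G k →
    br x (br y z) = br (br x y) z + ssign F i j • br y (br x z)

variable {F : Type*} [Field F] {L : Type*} [AddCommGroup L] [Module F L]

/-- `δ : L × L → L` is a super-biderivation of degree `τ`. -/
structure IsSuperBiderivation (A : LieSuperAlg F L) (τ : ZMod 2) (δ : L → L → L) : Prop where
  add_left : ∀ x y z : L, δ (x + y) z = δ x z + δ y z
  smul_left : ∀ (c : F) (x z : L), δ (c • x) z = c • δ x z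
  add_right : ∀ x y z : L, δ x (y + z) = δ x y + δ x z
  smul_right : ∀ (c : F) (x z : L), δ x (c • z) = c • δ x z
  deg : ∀ {i j : ZMod 2} {x y : L}, x ∈ A.G i → y ∈ A.G j → δ x y ∈ A.G (i + j + τ)
  skew : ∀ {i j : ZMod 2} {x y : L}, x ∈ A.G i → y ∈ A.G j →
    δ x y = -(ssign F i j • δ y x)
  leibniz : ∀ {i j k : ZMod 2} {x y z : L}, x ∈ A.G i → y ∈ A.G j → z ∈ A.G k →
    δ (A.br x y) z = ssign F τ i • A.br x (δ y z) + ssign F j k • A.br (δ x z) y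

/-- `f : L → L` is an even linear super-commuting map. -/
structure IsSuperCommuting (A : LieSuperAlg F L) (f : L → L) : Prop where
  map_add : ∀ x y : L, f (x + y) = f x + f y
  map_smul : ∀ (c : F) (x : L), f (c • x) = c • f x
  even : ∀ {i : ZMod 2} {x : L}, x ∈ A.G i → f x ∈ A.G i
  comm : ∀ x y : L, A.br (f x) y = A.br x (f y)

/-- `γ : L → L` is a homogeneous element of the centroid `Γ(L)`, of degree `τ`. -/
structure InCentroid (A : LieSuperAlg F L) (τ : ZMod 2) (γ : L → L) : Prop where
  map_add : ∀ x y : L, γ (x + y) = γ x + γ y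
  map_smul : ∀ (c : F) (x : L), γ (c • x) = c • γ x
  deg : ∀ {i : ZMod 2} {x : L}, x ∈ A.G i → γ x ∈ A.G (i + τ)
  centroid : ∀ {i j : ZMod 2} {x y : L}, x ∈ A.G i → y ∈ A.G j →
    γ (A.br x y) = ssign F τ i • A.br x (γ y)

/-- The derived subalgebra `L' = [L, L]`, the span of all brackets. -/
def derived (A : LieSuperAlg F L) : Submodule F L :=
  Submodule.span F {z : L | ∃ x y : L, z = A.br x y}

/-- The center `Z(L)` as a submodule. -/
def centerSub (A : LieSuperAlg F L) : Submodule F L where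
  carrier := {v : L | ∀ x : L, A.br x v = 0}
  add_mem' := by
    intro a b ha hb x
    rw [A.br_add_right, ha x, hb x, add_zero]
  zero_mem' := by
    intro x
    simpa using A.br_smul_right (0 : F) x 0
  smul_mem' := by
    intro c a ha x
    rw [A.br_smul_right, ha x, smul_zero]

-- ssign lemmas
lemma ssign_sq (F : Type*) [Field F] (i j : ZMod 2) : ssign F i j * ssign F i j = 1 := by
  unfold ssign; split_ifs <;> ring

lemma ssign_comm (F : Type*) [Field F] (i j : ZMod 2) : ssign F i j = ssign F j i := by
  unfold ssign; rw [mul_comm]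

lemma ssign_add_left (F : Type*) [Field F] (i j k : ZMod 2) :
    ssign F (i + j) k = ssign F i k * ssign F j k := by
  have h : ∀ a : ZMod 2, a = 0 ∨ a = 1 := by decide
  rcases h i with hi|hi <;> rcases h j with hj|hj <;> rcases h k with hk|hk <;>
    subst hi <;> subst hj <;> subst hk <;> simp [ssign] <;> norm_num

lemma ssign_add_right (F : Type*) [Field F] (i j k : ZMod 2) :
    ssign F i (j + k) = ssign F i j * ssign F i k := by
  rw [ssign_comm, ssign_add_left, ssign_comm F j i, ssign_comm F k i]

namespace LieSuperAlg
variable (A : LieSuperAlg F L)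

lemma br_zero_right (x : L) : A.br x 0 = 0 := by
  simpa using A.br_smul_right 0 x 0

lemma br_zero_left (x : L) : A.br 0 x = 0 := by
  simpa using A.br_smul_left 0 0 x

lemma br_neg_right (x y : L) : A.br x (-y) = -A.br x y := by
  have h := A.br_smul_right (-1) x y
  simpa using h

lemma br_neg_left (x y : L) : A.br (-x) y = -A.br x y := by
  have h := A.br_smul_left (-1) x y
  simpa using h

lemma br_sub_right (x y z : L) : A.br x (y - z) = A.br x y - A.br x z := by
  rw [sub_eq_add_neg, A.br_add_right, A.br_neg_right, sub_eq_add_neg]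

lemma br_sub_left (x y z : L) : A.br (x - y) z = A.br x z - A.br y z := by
  rw [sub_eq_add_neg, A.br_add_left, A.br_neg_left, sub_eq_add_neg]

lemma decomp (x : L) : ∃ a b : L, a ∈ A.G 0 ∧ b ∈ A.G 1 ∧ x = a + b := by
  have h := A.isInternal.submodule_iSup_eq_top
  have h2 : (⨆ i, A.G i) = A.G 0 ⊔ A.G 1 := by
    apply le_antisymm
    · refine iSup_le fun i => ?_
      have hcase : ∀ a : ZMod 2, a = 0 ∨ a = 1 := by decide
      rcases hcase i with h'|h' <;> subst h'
      · exact le_sup_left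
      · exact le_sup_right
    · exact sup_le (le_iSup _ 0) (le_iSup _ 1)
  have hx : x ∈ A.G 0 ⊔ A.G 1 := by rw [← h2, h]; trivial
  rcases Submodule.mem_sup.mp hx with ⟨a, ha, b, hb, hab⟩
  exact ⟨a, b, ha, hb, hab.symm⟩

lemma homog_ext {P : L → Prop}
    (hadd : ∀ a b : L, P a → P b → P (a + b))
    (h : ∀ (i : ZMod 2) (x : L), x ∈ A.G i → P x) : ∀ x : L, P x := by
  intro x
  rcases A.decomp x with ⟨a, b, ha, hb, rfl⟩
  exact hadd _ _ (h 0 a ha) (h 1 b hb)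

/-- set of homogeneous brackets -/
def HB : Set L :=
  {z : L | ∃ (i j : ZMod 2) (a b : L), a ∈ A.G i ∧ b ∈ A.G j ∧ z = A.br a b}

lemma span_HB (hperf : derived A = ⊤) : Submodule.span F (A.HB) = ⊤ := by
  apply le_antisymm le_top
  have hsub : {z : L | ∃ x y : L, z = A.br x y} ⊆ (Submodule.span F (A.HB) : Set L) := by
    rintro z ⟨x, y, rfl⟩
    rcases A.decomp x with ⟨x0, x1, hx0, hx1, rfl⟩
    rcases A.decomp y with ⟨y0, y1, hy0, hy1, rfl⟩
    rw [A.br_add_left, A.br_add_right, A.br_add_right]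
    have mem : ∀ {i j : ZMod 2} {a b : L}, a ∈ A.G i → b ∈ A.G j →
        A.br a b ∈ Submodule.span F (A.HB) := fun h1 h2 =>
      Submodule.subset_span ⟨_, _, _, _, h1, h2, rfl⟩
    exact add_mem (add_mem (mem hx0 hy0) (mem hx0 hy1)) (add_mem (mem hx1 hy0) (mem hx1 hy1))
  calc (⊤ : Submodule F L) = derived A := hperf.symm
    _ ≤ Submodule.span F (A.HB) := Submodule.span_le.mpr hsub

lemma br_span_ind (hperf : derived A = ⊤) {P : L → Prop}
    (h0 : P 0) (hadd : ∀ a b : L, P a → P b → P (a + b))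
    (hsmul : ∀ (c : F) (a : L), P a → P (c • a))
    (hbr : ∀ (i j : ZMod 2) (a b : L), a ∈ A.G i → b ∈ A.G j → P (A.br a b)) :
    ∀ w : L, P w := by
  intro w
  have hw : w ∈ Submodule.span F (A.HB) := by rw [A.span_HB hperf]; trivial
  induction hw using Submodule.span_induction with
  | mem z hz => obtain ⟨i, j, a, b, ha, hb, rfl⟩ := hz; exact hbr i j a b ha hb
  | zero => exact h0
  | add a b _ _ pa pb => exact hadd a b pa pb
  | smul c a _ pa => exact hsmul c a pa

end LieSuperAlg

section Main
variable {A : LieSuperAlg F L} {f : L → L}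

lemma phiRel (hf : IsSuperCommuting A f) {i j k l : ZMod 2} {x y u v : L}
    (hx : x ∈ A.G i) (hy : y ∈ A.G j) (hu : u ∈ A.G k) (hv : v ∈ A.G l) :
    A.br (A.br (f x) y) (A.br u v) - A.br (A.br x y) (A.br (f u) v)
      = (ssign F i j * ssign F i k * ssign F j k) •
        (A.br (A.br (f u) y) (A.br x v) - A.br (A.br u y) (A.br (f x) v)) := by
  have J := A.super_jacobi hx hu (hf.even (A.br_deg hy hv))
  rw [← hf.comm u (A.br y v), ← hf.comm x (A.br y v), ← hf.comm (A.br x u) (A.br y v)] at J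
  rw [A.super_jacobi (hf.even hu) hy hv, A.super_jacobi (hf.even hx) hy hv] at J
  simp only [A.br_add_right, A.br_smul_right] at J
  rw [ssign_comm F k j] at J
  have K1 := A.super_jacobi hx hu (hf.even hy)
  rw [← hf.comm u y, ← hf.comm x y, ← hf.comm (A.br x u) y] at K1
  have K1' : A.br (f (A.br x u)) y
      = A.br x (A.br (f u) y) - ssign F i k • A.br u (A.br (f x) y) := by
    linear_combination (norm := module) -K1
  have K2 := A.super_jacobi hx hu (hf.even hv)
  rw [← hf.comm u v, ← hf.comm x v, ← hf.comm (A.br x u) v] at K2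
  have K2' : A.br (f (A.br x u)) v
      = A.br x (A.br (f u) v) - ssign F i k • A.br u (A.br (f x) v) := by
    linear_combination (norm := module) -K2
  have K := A.super_jacobi (hf.even (A.br_deg hx hu)) hy hv
  rw [ssign_add_left, ssign_comm F k j] at K
  rw [K1', K2'] at K
  simp only [A.br_sub_left, A.br_smul_left, A.br_sub_right, A.br_smul_right] at K
  have J1 := A.super_jacobi hx (A.br_deg (hf.even hu) hy) hv
  rw [ssign_add_right] at J1
  have J2 := A.super_jacobi hx hy (A.br_deg (hf.even hu) hv)
  have J3 := A.super_jacobi hu (A.br_deg (hf.even hx) hy) hv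
  rw [ssign_add_right, ssign_comm F k i, ssign_comm F k j] at J3
  have J4 := A.super_jacobi hu hy (A.br_deg (hf.even hx) hv)
  rw [ssign_comm F k j] at J4
  linear_combination (norm := (match_scalars <;> (simp only [ssign]; split_ifs <;> norm_num)))
    (-(ssign F j k)) • J + (-(ssign F j k)) • K + (ssign F j k) • J1
    + (ssign F j k * ssign F j k) • J2 + (-(ssign F j k * ssign F i k)) • J3
    + (-(ssign F j k * ssign F i k * ssign F i j)) • J4

end Main

section Main2
variable {A : LieSuperAlg F L} {f : L → L}

lemma swf (hf : IsSuperCommuting A f) {α β : ZMod 2} {a b : L}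
    (ha : a ∈ A.G α) (hb : b ∈ A.G β) :
    A.br (f a) b = -(ssign F α β • A.br (f b) a) := by
  have h := A.super_skew (hf.even ha) hb
  rw [← hf.comm b a] at h
  exact h

lemma sw1 (hf : IsSuperCommuting A f) {α β : ZMod 2} {a b : L}
    (ha : a ∈ A.G α) (hb : b ∈ A.G β) (Z : L) :
    A.br (A.br (f a) b) Z = -(ssign F α β • A.br (A.br (f b) a) Z) := by
  rw [swf hf ha hb, A.br_neg_left, A.br_smul_left]

lemma sw2 {α β : ZMod 2} {a b : L} (ha : a ∈ A.G α) (hb : b ∈ A.G β) (Z : L) :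
    A.br (A.br a b) Z = -(ssign F α β • A.br (A.br b a) Z) := by
  rw [A.super_skew ha hb, A.br_neg_left, A.br_smul_left]

lemma clubs (h2 : (2 : F) ≠ 0) (hf : IsSuperCommuting A f) {i j k l : ZMod 2} {x y u v : L}
    (hx : x ∈ A.G i) (hy : y ∈ A.G j) (hu : u ∈ A.G k) (hv : v ∈ A.G l) :
    A.br (A.br (f x) y) (A.br u v) = A.br (A.br x y) (A.br (f u) v) := by
  have E1 := phiRel hf hx hy hu hv
  have E3 := phiRel hf hy hu hx hv
  rw [ssign_comm F j i, ssign_comm F k i] at E3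
  have E5 := phiRel hf hu hx hy hv
  rw [ssign_comm F k i, ssign_comm F k j] at E5
  have S2a := sw1 hf hu hy (A.br x v)
  rw [ssign_comm F k j] at S2a
  have S2b := sw2 hu hy (A.br (f x) v)
  rw [ssign_comm F k j] at S2b
  have S4a := sw1 hf hx hu (A.br y v)
  have S4b := sw2 hx hu (A.br (f y) v)
  have S6a := sw1 hf hy hx (A.br u v)
  rw [ssign_comm F j i] at S6a
  have S6b := sw2 hy hx (A.br (f u) v)
  rw [ssign_comm F j i] at S6b
  have hkey : (2 : F) • (A.br (A.br (f x) y) (A.br u v) - A.br (A.br x y) (A.br (f u) v)) = 0 := by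
    linear_combination (norm := (match_scalars <;> (simp only [ssign]; split_ifs <;> norm_num)))
      E1
      + (ssign F i j * ssign F i k * ssign F j k) • S2a
      + (-(ssign F i j * ssign F i k * ssign F j k)) • S2b
      + (-(ssign F i j * ssign F i k * ssign F j k * ssign F j k)) • E3
      + (-((ssign F i j * ssign F i k * ssign F j k)^2 * ssign F j k)) • S4a
      + ((ssign F i j * ssign F i k * ssign F j k)^2 * ssign F j k) • S4b
      + ((ssign F i j * ssign F i k * ssign F j k)^2 * ssign F j k * ssign F i k) • E5
      + ((ssign F i j * ssign F i k * ssign F j k)^3 * ssign F j k * ssign F i k) • S6a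
      + (-((ssign F i j * ssign F i k * ssign F j k)^3 * ssign F j k * ssign F i k)) • S6b
  have h0 : A.br (A.br (f x) y) (A.br u v) - A.br (A.br x y) (A.br (f u) v) = 0 := by
    have h' := congrArg (fun w => (2:F)⁻¹ • w) hkey
    simpa [smul_smul, inv_mul_cancel₀ h2] using h'
  exact sub_eq_zero.mp h0

end Main2

section Main3
variable {A : LieSuperAlg F L} {f : L → L}

lemma fneg (hf : IsSuperCommuting A f) (w : L) : f (-w) = -f w := by
  simpa using hf.map_smul (-1) w

lemma dskew (hf : IsSuperCommuting A f) {ρ τ : ZMod 2} {r t : L}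
    (hr : r ∈ A.G ρ) (ht : t ∈ A.G τ) :
    f (A.br r t) - A.br r (f t)
      = -(ssign F ρ τ • (f (A.br t r) - A.br t (f r))) := by
  have h1 := congrArg f (A.super_skew hr ht)
  rw [fneg hf, hf.map_smul] at h1
  have h2' := A.super_skew (hf.even hr) ht
  rw [hf.comm r t] at h2'
  linear_combination (norm := module) h1 - h2'

lemma n3s (h2 : (2 : F) ≠ 0) (hf : IsSuperCommuting A f) {p q i j : ZMod 2} {a b x y : L}
    (ha : a ∈ A.G p) (hb : b ∈ A.G q) (hx : x ∈ A.G i) (hy : y ∈ A.G j) :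
    A.br (f (A.br a b) - A.br a (f b)) (A.br x y)
      = ssign F (p + q) i •
          A.br (f (A.br x (A.br a b)) - A.br x (f (A.br a b))) y := by
  have hc := A.br_deg ha hb
  have h1 := A.super_jacobi (hf.even hc) hx hy
  rw [hf.comm (A.br a b) x, hf.comm (A.br a b) y] at h1
  have h2' := A.super_jacobi hc (hf.even hx) hy
  have h3 := clubs h2 hf ha hb hx hy
  rw [hf.comm a b] at h3
  have h5 := A.super_jacobi hx hc (hf.even hy)
  rw [← hf.comm x y, ssign_comm F i (p+q)] at h5
  have h6 := A.super_jacobi (hf.even hx) hc hy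
  rw [hf.comm x (A.br a b), ssign_comm F i (p+q)] at h6
  have h7 := (hf.comm (A.br x (A.br a b)) y).symm
  rw [A.br_sub_left, A.br_sub_left]
  linear_combination (norm :=
      (match_scalars <;> first
        | ring1
        | (simp only [ssign]; split_ifs <;> norm_num)))
    h1 - h3 - h2' + (ssign F (p+q) i) • h5 - (ssign F (p+q) i) • h6
    + (ssign F (p+q) i) • h7

lemma n3c (h2 : (2 : F) ≠ 0) (hf : IsSuperCommuting A f) {p q i j : ZMod 2} {a b x y : L}
    (ha : a ∈ A.G p) (hb : b ∈ A.G q) (hx : x ∈ A.G i) (hy : y ∈ A.G j) :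
    A.br (f (A.br a b) - A.br a (f b)) (A.br x y)
      = -A.br (f (A.br (A.br a b) x) - A.br (A.br a b) (f x)) y := by
  rw [n3s h2 hf ha hb hx hy, dskew hf hx (A.br_deg ha hb),
    A.br_neg_left, A.br_smul_left, ssign_comm F i (p+q), smul_neg, smul_smul,
    ssign_sq, one_smul]

end Main3

section Main4
variable {A : LieSuperAlg F L} {f : L → L}

lemma core (h2 : (2 : F) ≠ 0) (hf : IsSuperCommuting A f)
    (hperf : derived A = ⊤) (hcent : ∀ v : L, (∀ x : L, A.br x v = 0) → v = 0)
    {m1 m2 i p q : ZMod 2} {z1 z2 x a b : L}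
    (hz1 : z1 ∈ A.G m1) (hz2 : z2 ∈ A.G m2) (hx : x ∈ A.G i)
    (ha : a ∈ A.G p) (hb : b ∈ A.G q) :
    A.br (f (A.br (A.br z1 z2) (A.br x a)) - A.br (A.br z1 z2) (f (A.br x a))) b = 0 := by
  have hz : A.br z1 z2 ∈ A.G (m1 + m2) := A.br_deg hz1 hz2
  have e1 := n3c h2 hf hz1 hz2 hx (A.br_deg ha hb)
  have e2 := n3c h2 hf hz hx ha hb
  have e3 := A.super_jacobi hx ha hb
  have e4 := n3c h2 hf hz1 hz2 (A.br_deg hx ha) hb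
  have e5 := n3c h2 hf hz1 hz2 ha (A.br_deg hx hb)
  have e6 := n3c h2 hf hz ha hx hb
  have e7 := congrArg (fun w => A.br (f (A.br z1 z2) - A.br z1 (f z2)) w) e3
  simp only [A.br_add_right, A.br_smul_right] at e7
  have starstar : A.br (f (A.br (A.br (A.br z1 z2) x) a) - A.br (A.br (A.br z1 z2) x) (f a)) b
      = -A.br (f (A.br (A.br z1 z2) (A.br x a)) - A.br (A.br z1 z2) (f (A.br x a))) b
        + ssign F i p • A.br (f (A.br (A.br (A.br z1 z2) a) x) - A.br (A.br (A.br z1 z2) a) (f x)) b := by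
    linear_combination (norm := module)
      -e1 + e2 + e4 + e7 + (ssign F i p) • e5 - (ssign F i p) • e6
  -- Jacobi consequence
  have jz := A.super_jacobi hz hx ha
  have sk := A.super_skew (A.br_deg hz ha) hx
  rw [ssign_add_left, ssign_comm F p i] at sk
  have hS2 : A.br (A.br (A.br z1 z2) x) a
      = A.br (A.br z1 z2) (A.br x a) + ssign F i p • A.br (A.br (A.br z1 z2) a) x := by
    linear_combination (norm :=
        (match_scalars <;> first
          | ring1
          | (simp only [ssign]; split_ifs <;> norm_num)))
      -jz - (ssign F i p) • sk
  have fS2 := congrArg f hS2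
  rw [hf.map_add, hf.map_smul] at fS2
  have bfS2 := congrArg (fun w => A.br w b) fS2
  simp only [A.br_add_left, A.br_smul_left] at bfS2
  -- the element R
  have hzero : A.br (A.br z1 z2) (A.br x a) - A.br (A.br (A.br z1 z2) x) a
      + ssign F i p • A.br (A.br (A.br z1 z2) a) x = 0 := by
    linear_combination (norm := module) -hS2
  have Rw : ∀ (κ lam : ZMod 2) (u v : L), u ∈ A.G κ → v ∈ A.G lam →
      A.br (A.br (A.br z1 z2) (f (A.br x a)) - A.br (A.br (A.br z1 z2) x) (f a)
        + ssign F i p • A.br (A.br (A.br z1 z2) a) (f x)) (A.br u v) = 0 := by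
    intro κ lam u v hu hv
    have t1 := clubs h2 hf hz (A.br_deg hx ha) hu hv
    rw [hf.comm (A.br z1 z2) (A.br x a)] at t1
    have t2 := clubs h2 hf (A.br_deg hz hx) ha hu hv
    rw [hf.comm (A.br (A.br z1 z2) x) a] at t2
    have t3 := clubs h2 hf (A.br_deg hz ha) hx hu hv
    rw [hf.comm (A.br (A.br z1 z2) a) x] at t3
    have bz := congrArg (fun w => A.br w (A.br (f u) v)) hzero
    simp only [A.br_add_left, A.br_sub_left, A.br_smul_left, A.br_zero_left] at bz
    rw [A.br_add_left, A.br_sub_left, A.br_smul_left]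
    linear_combination (norm := module) t1 - t2 + (ssign F i p) • t3 + bz
  have Rall : ∀ w : L,
      A.br (A.br (A.br z1 z2) (f (A.br x a)) - A.br (A.br (A.br z1 z2) x) (f a)
        + ssign F i p • A.br (A.br (A.br z1 z2) a) (f x)) w = 0 := by
    refine A.br_span_ind hperf (A.br_zero_right _) ?_ ?_ ?_
    · intro w1 w2 p1 p2; rw [A.br_add_right, p1, p2, add_zero]
    · intro c w1 p1; rw [A.br_smul_right, p1, smul_zero]
    · intro κ lam u v hu hv; exact Rw κ lam u v hu hv
  have Rmem : A.br (A.br z1 z2) (f (A.br x a)) - A.br (A.br (A.br z1 z2) x) (f a)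
      + ssign F i p • A.br (A.br (A.br z1 z2) a) (f x) ∈ A.G (m1 + m2 + (i + p)) := by
    have mem1 := A.br_deg hz (hf.even (A.br_deg hx ha))
    have mem2 := A.br_deg (A.br_deg hz hx) (hf.even ha)
    have mem3 := A.br_deg (A.br_deg hz ha) (hf.even hx)
    have eq2 : m1 + m2 + i + p = m1 + m2 + (i + p) := by ring
    have eq3 : m1 + m2 + p + i = m1 + m2 + (i + p) := by ring
    rw [eq2] at mem2
    rw [eq3] at mem3
    exact add_mem (sub_mem mem1 mem2) (Submodule.smul_mem _ _ mem3)
  have Rleft : ∀ w : L, A.br w (A.br (A.br z1 z2) (f (A.br x a))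
      - A.br (A.br (A.br z1 z2) x) (f a)
      + ssign F i p • A.br (A.br (A.br z1 z2) a) (f x)) = 0 := by
    refine A.homog_ext ?_ ?_
    · intro w1 w2 p1 p2; rw [A.br_add_left, p1, p2, add_zero]
    · intro t w hw
      rw [A.super_skew hw Rmem, Rall w]
      simp
  have R0 := hcent _ Rleft
  have bR0 := congrArg (fun w => A.br w b) R0
  simp only [A.br_add_left, A.br_sub_left, A.br_smul_left, A.br_zero_left] at bR0
  simp only [A.br_sub_left] at starstar bfS2 ⊢
  have h2smul : (2 : F) • (A.br (f (A.br (A.br z1 z2) (A.br x a))) b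
      - A.br (A.br (A.br z1 z2) (f (A.br x a))) b) = 0 := by
    linear_combination (norm := module) starstar - bfS2 - bR0
  have h' := congrArg (fun w => (2:F)⁻¹ • w) h2smul
  simpa [smul_smul, inv_mul_cancel₀ h2] using h'

end Main4

section Main5
variable {A : LieSuperAlg F L} {f : L → L}

lemma f0 (hf : IsSuperCommuting A f) : f 0 = 0 := by
  simpa using hf.map_smul 0 0

lemma coreflip (h2 : (2 : F) ≠ 0) (hf : IsSuperCommuting A f)
    (hperf : derived A = ⊤) (hcent : ∀ v : L, (∀ x : L, A.br x v = 0) → v = 0)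
    {m1 m2 i p : ZMod 2} {z1 z2 x a : L}
    (hz1 : z1 ∈ A.G m1) (hz2 : z2 ∈ A.G m2) (hx : x ∈ A.G i) (ha : a ∈ A.G p) :
    ∀ u : L, A.br u (f (A.br (A.br z1 z2) (A.br x a))
      - A.br (A.br z1 z2) (f (A.br x a))) = 0 := by
  have hz : A.br z1 z2 ∈ A.G (m1 + m2) := A.br_deg hz1 hz2
  have Dmem : f (A.br (A.br z1 z2) (A.br x a)) - A.br (A.br z1 z2) (f (A.br x a))
      ∈ A.G (m1 + m2 + (i + p)) :=
    sub_mem (hf.even (A.br_deg hz (A.br_deg hx ha)))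
      (A.br_deg hz (hf.even (A.br_deg hx ha)))
  refine A.homog_ext ?_ ?_
  · intro w1 w2 p1 p2; rw [A.br_add_left, p1, p2, add_zero]
  · intro t w hw
    rw [A.super_skew hw Dmem, core h2 hf hperf hcent hz1 hz2 hx ha hw]
    simp

lemma st2 (h2 : (2 : F) ≠ 0) (hf : IsSuperCommuting A f)
    (hperf : derived A = ⊤) (hcent : ∀ v : L, (∀ x : L, A.br x v = 0) → v = 0)
    {i p : ZMod 2} {x a : L} (hx : x ∈ A.G i) (ha : a ∈ A.G p) :
    ∀ u z : L, A.br u (f (A.br z (A.br x a)) - A.br z (f (A.br x a))) = 0 := by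
  intro u
  refine A.br_span_ind hperf ?_ ?_ ?_ ?_
  · rw [A.br_zero_left, f0 hf, A.br_zero_left, sub_zero, A.br_zero_right]
  · intro w1 w2 p1 p2
    rw [A.br_add_left, hf.map_add, A.br_add_left]
    have e : f (A.br w1 (A.br x a)) + f (A.br w2 (A.br x a))
        - (A.br w1 (f (A.br x a)) + A.br w2 (f (A.br x a)))
        = (f (A.br w1 (A.br x a)) - A.br w1 (f (A.br x a)))
          + (f (A.br w2 (A.br x a)) - A.br w2 (f (A.br x a))) := by abel
    rw [e, A.br_add_right, p1, p2, add_zero]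
  · intro c w1 p1
    rw [A.br_smul_left, hf.map_smul, A.br_smul_left, ← smul_sub, A.br_smul_right, p1, smul_zero]
  · intro m1 m2 z1 z2 hz1 hz2
    exact coreflip h2 hf hperf hcent hz1 hz2 hx ha u

lemma st3 (h2 : (2 : F) ≠ 0) (hf : IsSuperCommuting A f)
    (hperf : derived A = ⊤) (hcent : ∀ v : L, (∀ x : L, A.br x v = 0) → v = 0) :
    ∀ u z w : L, A.br u (f (A.br z w) - A.br z (f w)) = 0 := by
  intro u z
  refine A.br_span_ind hperf ?_ ?_ ?_ ?_
  · simp [A.br_zero_right, f0 hf]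
  · intro w1 w2 p1 p2
    rw [A.br_add_right, hf.map_add, hf.map_add, A.br_add_right]
    have e : f (A.br z w1) + f (A.br z w2) - (A.br z (f w1) + A.br z (f w2))
        = (f (A.br z w1) - A.br z (f w1)) + (f (A.br z w2) - A.br z (f w2)) := by abel
    rw [e, A.br_add_right, p1, p2, add_zero]
  · intro c w1 p1
    rw [A.br_smul_right, hf.map_smul, hf.map_smul, A.br_smul_right, ← smul_sub,
      A.br_smul_right, p1, smul_zero]
  · intro i p x a hx ha
    exact st2 h2 hf hperf hcent hx ha u z

end Main5


theorem stmt16 (h2 : (2 : F) ≠ 0) (A : LieSuperAlg F L)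
    (hperf : derived A = ⊤)
    (hcent : ∀ v : L, (∀ x : L, A.br x v = 0) → v = 0)
    (f : L → L) (hf : IsSuperCommuting A f) :
    ∀ u x y : L, A.br u (f (A.br x y)) = A.br u (A.br x (f y)) := by
  intro u x y
  have h := st3 h2 hf hperf hcent u x y
  rw [A.br_sub_right] at h
  exact sub_eq_zero.mp h
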